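/- Let A be a p×p integer matrix and B a q×q integer matrix with p+q even. Then A and B are integrally cobordant if and only if they are rationally cobordant. -/

import Mathlib

open Matrix

/-- A square matrix over a commutative ring is *null-cobordant* if its size is even,
say `n = 2 * r`, and it is congruent, via a matrix `P` with unit determinant, to a
block matrix whose upper-left `r × r` block is zero. -/
def Matrix.IsNullCobordant {R : Type*} [CommRing R] {n : ℕ}
    (A : Matrix (Fin n) (Fin n) R) : Prop :=
  ∃ r : ℕ, n = 2 * r ∧ ∃ P : Matrix (Fin n) (Fin n) R, IsUnit P.det ∧
    ∀ i j : Fin n, (i : ℕ) < r → (j : ℕ) < r → (Pᵀ * A * P) i j = 0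

/-- The block sum `A ⊞ B` of square matrices: the block-diagonal matrix `[[A,0],[0,B]]`. -/
def Matrix.blockSum {R : Type*} [CommRing R] {p q : ℕ}
    (A : Matrix (Fin p) (Fin p) R) (B : Matrix (Fin q) (Fin q) R) :
    Matrix (Fin (p + q)) (Fin (p + q)) R :=
  Matrix.reindex finSumFinEquiv finSumFinEquiv (Matrix.fromBlocks A 0 0 B)

/-!
A rational null-cobordism of `A` (of size `2r`) is an `r`-dimensional subspace of `ℚ^{2r}` that
is totally isotropic for the form `x ⬝ᵥ A *ᵥ y`. Clearing denominators gives `r` linearly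
independent isotropic integer vectors; they span an isotropic lattice `L`. By the Smith normal
form, `L` has a basis `aᵢ • e (f i)` for a basis `e` of `ℤ^{2r}` and nonzero `aᵢ`, so the vectors
`e (f i)` are isotropic themselves, and `e`, reordered to put them first, is the required
unimodular change of basis. Everything works over any principal ideal domain and its fraction
field.
-/

namespace Matrix

variable {R : Type*} [CommRing R]

theorem transpose_mul_mul_apply {ι : Type*} [Fintype ι] (A P : Matrix ι ι R) (i j : ι) :
    (Pᵀ * A * P) i j = Pᵀ i ⬝ᵥ A *ᵥ Pᵀ j := by
  rw [Matrix.mul_assoc, mul_apply']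
  rfl

theorem _root_.RingHom.map_dotProduct_mulVec {S : Type*} [CommRing S] {ι : Type*} [Fintype ι]
    (f : R →+* S) (A : Matrix ι ι R) (x y : ι → R) :
    f (x ⬝ᵥ A *ᵥ y) = f ∘ x ⬝ᵥ A.map f *ᵥ (f ∘ y) := by
  rw [RingHom.map_dotProduct]
  congr 1
  ext k
  exact RingHom.map_mulVec _ _ _ _

theorem dotProduct_mulVec_eq_zero_of_mem_span {ι : Type*} [Fintype ι] (A : Matrix ι ι R)
    {S : Set (ι → R)} (hS : ∀ u ∈ S, ∀ v ∈ S, u ⬝ᵥ A *ᵥ v = 0) {x y : ι → R}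
    (hx : x ∈ Submodule.span R S) (hy : y ∈ Submodule.span R S) : x ⬝ᵥ A *ᵥ y = 0 := by
  induction hx, hy using Submodule.span_induction₂ with
  | mem_mem u v hu hv => exact hS u hu v hv
  | zero_left => simp
  | zero_right => simp
  | add_left => simp_all [add_dotProduct]
  | add_right => simp_all [mulVec_add]
  | smul_left => simp_all [smul_dotProduct]
  | smul_right => simp_all [mulVec_smul]

theorem IsNullCobordant.map {S : Type*} [CommRing S] {n : ℕ} {A : Matrix (Fin n) (Fin n) R}
    (hA : A.IsNullCobordant) (f : R →+* S) : (A.map f).IsNullCobordant := by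
  obtain ⟨r, hn, P, hP, hzero⟩ := hA
  refine ⟨r, hn, P.map f, by simpa only [RingHom.map_det, RingHom.mapMatrix_apply] using hP.map f,
    fun i j hi hj => ?_⟩
  rw [← transpose_map, ← Matrix.map_mul, ← Matrix.map_mul, map_apply, hzero i j hi hj, map_zero]

theorem isNullCobordant_iff_exists_basis {n : ℕ} (A : Matrix (Fin n) (Fin n) R) :
    A.IsNullCobordant ↔ ∃ r, n = 2 * r ∧ ∃ b : Module.Basis (Fin n) R (Fin n → R),
      ∀ i j : Fin n, (i : ℕ) < r → (j : ℕ) < r → b i ⬝ᵥ A *ᵥ b j = 0 := by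
  refine exists_congr fun r => and_congr_right fun _ => ⟨?_, ?_⟩
  · rintro ⟨P, hP, hzero⟩
    have hb : IsUnit ((Pi.basisFun R (Fin n)).det (Pᵀ ·)) := by
      rwa [Pi.basisFun_det_apply, ← det_transpose]
    obtain ⟨hli, hspan⟩ := ((Pi.basisFun R (Fin n)).is_basis_iff_det).2 hb
    refine ⟨.mk hli hspan.ge, fun i j hi hj => ?_⟩
    simpa only [Module.Basis.coe_mk, transpose_mul_mul_apply] using hzero i j hi hj
  · rintro ⟨b, hb⟩
    refine ⟨(Matrix.of b)ᵀ, ?_, fun i j hi hj => ?_⟩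
    · rw [det_transpose, ← Pi.basisFun_det_apply]
      exact (Pi.basisFun R (Fin n)).isUnit_det b
    · rw [transpose_mul_mul_apply]
      exact hb i j hi hj

theorem isNullCobordant_of_isotropic_embedding {n r : ℕ} (A : Matrix (Fin n) (Fin n) R)
    (hn : n = 2 * r) (b : Module.Basis (Fin n) R (Fin n → R)) (f : Fin r ↪ Fin n)
    (hf : ∀ i j, b (f i) ⬝ᵥ A *ᵥ b (f j) = 0) : A.IsNullCobordant := by
  obtain ⟨σ, hσ⟩ := Equiv.Perm.exists_extending_pair (Fin.castLE (by omega)) f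
    (Fin.castLE_injective _) f.injective
  refine (isNullCobordant_iff_exists_basis A).2 ⟨r, hn, b.reindex σ.symm, fun i j hi hj => ?_⟩
  rw [Module.Basis.reindex_apply, Equiv.symm_symm, Module.Basis.reindex_apply, Equiv.symm_symm,
    show σ i = f ⟨i, hi⟩ from hσ ⟨i, hi⟩, show σ j = f ⟨j, hj⟩ from hσ ⟨j, hj⟩]
  exact hf _ _

theorem exists_basis_isotropic_of_isotropic_submodule [IsDomain R] [IsPrincipalIdealRing R]
    {ι : Type*} [Fintype ι] (A : Matrix ι ι R) (L : Submodule R (ι → R))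
    (hL : ∀ x ∈ L, ∀ y ∈ L, x ⬝ᵥ A *ᵥ y = 0) :
    ∃ (b : Module.Basis ι R (ι → R)) (f : Fin (Module.finrank R L) ↪ ι),
      ∀ i j, b (f i) ⬝ᵥ A *ᵥ b (f j) = 0 := by
  obtain ⟨m, bM, bN, f, a, snf⟩ := L.smithNormalForm (Pi.basisFun R ι)
  rw [Module.finrank_eq_card_basis bN, Fintype.card_fin]
  have ha (i : Fin m) : a i ≠ 0 := by
    rintro hai
    apply bN.ne_zero i
    ext1
    rw [snf, hai, zero_smul, Submodule.coe_zero]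
  refine ⟨bM, f, fun i j => ?_⟩
  have h := hL _ (bN i).2 _ (bN j).2
  rw [snf, snf, smul_dotProduct, mulVec_smul, dotProduct_smul, smul_eq_mul, smul_eq_mul] at h
  simpa only [mul_eq_zero, ha, false_or] using h

theorem isNullCobordant_of_linearIndependent [IsDomain R] [IsPrincipalIdealRing R] {n r : ℕ}
    (A : Matrix (Fin n) (Fin n) R) (hn : n = 2 * r) {v : Fin r → Fin n → R}
    (hv : LinearIndependent R v) (hiso : ∀ i j, v i ⬝ᵥ A *ᵥ v j = 0) : A.IsNullCobordant := by
  have hL : ∀ x ∈ Submodule.span R (Set.range v), ∀ y ∈ Submodule.span R (Set.range v),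
      x ⬝ᵥ A *ᵥ y = 0 := fun x hx y hy =>
    dotProduct_mulVec_eq_zero_of_mem_span A (by rintro _ ⟨i, rfl⟩ _ ⟨j, rfl⟩; exact hiso i j) hx hy
  obtain ⟨b, f, hf⟩ := exists_basis_isotropic_of_isotropic_submodule A _ hL
  have hrank : Module.finrank R (Submodule.span R (Set.range v)) = r := by
    rw [finrank_span_eq_card hv, Fintype.card_fin]
  exact isNullCobordant_of_isotropic_embedding A hn b ((finCongr hrank.symm).toEmbedding.trans f)
    fun i j => hf _ _

theorem isNullCobordant_iff_exists_linearIndependent [IsDomain R] [IsPrincipalIdealRing R]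
    {n : ℕ} (A : Matrix (Fin n) (Fin n) R) :
    A.IsNullCobordant ↔ ∃ r, n = 2 * r ∧ ∃ v : Fin r → Fin n → R,
      LinearIndependent R v ∧ ∀ i j, v i ⬝ᵥ A *ᵥ v j = 0 := by
  refine ⟨fun hA => ?_, fun ⟨r, hn, v, hv, hiso⟩ =>
    isNullCobordant_of_linearIndependent A hn hv hiso⟩
  obtain ⟨r, hn, b, hb⟩ := (isNullCobordant_iff_exists_basis A).1 hA
  have hrn : r ≤ n := by omega
  exact ⟨r, hn, fun i => b (Fin.castLE hrn i),
    b.linearIndependent.comp _ (Fin.castLE_injective hrn), fun i j => hb _ _ i.2 j.2⟩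

theorem exists_linearIndependent_isotropic_of_fractionRing {K : Type*} [Field K] [Algebra R K]
    [IsFractionRing R K] {ι κ : Type*} [Fintype ι] [Fintype κ] (A : Matrix κ κ R)
    {v : ι → κ → K} (hv : LinearIndependent K v)
    (hiso : ∀ i j, v i ⬝ᵥ A.map (algebraMap R K) *ᵥ v j = 0) :
    ∃ w : ι → κ → R, LinearIndependent R w ∧ ∀ i j, w i ⬝ᵥ A *ᵥ w j = 0 := by
  obtain ⟨d, hd⟩ := IsLocalization.exist_integer_multiples_of_finite (nonZeroDivisors R)
    (fun p : ι × κ => v p.1 p.2)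
  choose w hw using hd
  have hw_map (i : ι) : algebraMap R K ∘ (fun k => w (i, k)) = algebraMap R K d • v i := by
    ext k
    simp [hw (i, k), Algebra.smul_def]
  have : Nontrivial R := (algebraMap R K).domain_nontrivial
  have hd0 : algebraMap R K d ≠ 0 := IsFractionRing.to_map_ne_zero_of_mem_nonZeroDivisors d.2
  refine ⟨fun i k => w (i, k), ?_, fun i j => ?_⟩
  · apply LinearIndependent.of_comp ((Algebra.linearMap R K).compLeft κ)
    have : (Algebra.linearMap R K).compLeft κ ∘ (fun i k => w (i, k)) =
        fun i => (Units.mk0 _ hd0 : K) • v i := funext hw_map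
    rw [this, LinearIndependent.iff_fractionRing R K]
    exact hv.units_smul _
  · apply IsFractionRing.injective R K
    rw [RingHom.map_dotProduct_mulVec, hw_map, hw_map, smul_dotProduct, mulVec_smul,
      dotProduct_smul, hiso, smul_zero, smul_zero, map_zero]

theorem isNullCobordant_map_algebraMap_iff [IsDomain R] [IsPrincipalIdealRing R] {K : Type*}
    [Field K] [Algebra R K] [IsFractionRing R K] {n : ℕ} (A : Matrix (Fin n) (Fin n) R) :
    (A.map (algebraMap R K)).IsNullCobordant ↔ A.IsNullCobordant := by
  refine ⟨fun hA => ?_, fun hA => hA.map _⟩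
  obtain ⟨r, hn, v, hv, hiso⟩ := (isNullCobordant_iff_exists_linearIndependent _).1 hA
  obtain ⟨w, hw, hwiso⟩ := exists_linearIndependent_isotropic_of_fractionRing A hv hiso
  exact isNullCobordant_of_linearIndependent A hn hw hwiso

end Matrix

theorem int_cobordant_iff_rat_cobordant_general (p q : ℕ)
    (A : Matrix (Fin p) (Fin p) ℤ) (B : Matrix (Fin q) (Fin q) ℤ) :
    (A.blockSum (-B)).IsNullCobordant ↔
      ((A.blockSum (-B)).map (Int.cast : ℤ → ℚ)).IsNullCobordant :=
  (isNullCobordant_map_algebraMap_iff (K := ℚ) _).symm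

/-- Two integer matrices (of sizes with even sum) are integrally cobordant if and only if
they are rationally cobordant. -/
theorem int_cobordant_iff_rat_cobordant (p q : ℕ) (hpq : Even (p + q))
    (A : Matrix (Fin p) (Fin p) ℤ) (B : Matrix (Fin q) (Fin q) ℤ) :
    (A.blockSum (-B)).IsNullCobordant ↔
      ((A.blockSum (-B)).map (Int.cast : ℤ → ℚ)).IsNullCobordant :=
  int_cobordant_iff_rat_cobordant_general p q A B
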